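/- For T > 0 let C = (1 − e^{−2πT})/(e^{2πT} − 1) and define ζ(z) = (1/2π) Log( C·(e^{2πT} − e^{−2πz})/(e^{−2πz} − e^{−2πT}) ), where Log is the principal branch of the logarithm. Let S = {z ∈ ℂ : −1/2 < Im z < 0}. Then: (a) for every z ∈ S the argument of Log lies in the open lower half-plane, so ζ is well defined and holomorphic on S; (b) ζ maps S biholomorphically onto S (ζ is injective on S and ζ(S) = S); (c) for real x with |x| < T the number ζ(x) is real, and x ↦ ζ(x) is a strictly increasing bijection from the interval (−T, T) onto ℝ. -/
import Mathlib

noncomputable section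

open Real

/-- The open strip `S(−1/2, 0) = {z : ℂ | −1/2 < Im z < 0}`. -/
def stripS : Set ℂ := {z : ℂ | -(1/2 : ℝ) < z.im ∧ z.im < 0}

/-- The constant `C = (1 − e^{−2πT})/(e^{2πT} − 1)`. -/
def zetaC (T : ℝ) : ℝ := (1 - Real.exp (-(2 * π * T))) / (Real.exp (2 * π * T) - 1)

/-- The argument of the logarithm: `C·(e^{2πT} − e^{−2πz})/(e^{−2πz} − e^{−2πT})`. -/
def zetaArg (T : ℝ) (z : ℂ) : ℂ :=
  (zetaC T : ℂ) * (Complex.exp ((2 * π * T : ℝ) : ℂ) - Complex.exp (-(((2 * π : ℝ) : ℂ) * z))) /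
    (Complex.exp (-(((2 * π : ℝ) : ℂ) * z)) - Complex.exp ((-(2 * π * T) : ℝ) : ℂ))

/-- The map `ζ(z) = (1/2π)·Log( C·(e^{2πT} − e^{−2πz})/(e^{−2πz} − e^{−2πT}) )`,
with `Log` the principal branch of the logarithm. -/
def zetaMap (T : ℝ) (z : ℂ) : ℂ := ((1 / (2 * π) : ℝ) : ℂ) * Complex.log (zetaArg T z)

/-! ### Auxiliary lemmas -/

private lemma mobius_im' (c a b : ℝ) (w : ℂ) :
    ((c:ℂ) * ((a:ℂ) - w) / (w - (b:ℂ))).im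
      = -(c * (a - b) * w.im) / Complex.normSq (w - (b:ℂ)) := by
  rw [Complex.div_im, div_sub_div_same]
  congr 1
  simp [Complex.mul_im, Complex.mul_re]
  ring

private lemma mobius2_im' (c a b : ℝ) (t : ℂ) :
    (((c:ℂ) * (a:ℂ) + (b:ℂ) * t) / ((c:ℂ) + t)).im
      = c * (b - a) * t.im / Complex.normSq ((c:ℂ) + t) := by
  rw [Complex.div_im, div_sub_div_same]
  congr 1
  simp [Complex.mul_im, Complex.mul_re, Complex.add_re, Complex.add_im]
  ring

private lemma zetaArg_eq (T : ℝ) (z : ℂ) :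
    zetaArg T z = (zetaC T : ℂ) * (((Real.exp (2 * π * T) : ℝ) : ℂ)
        - Complex.exp (-(((2 * π : ℝ) : ℂ) * z))) /
      (Complex.exp (-(((2 * π : ℝ) : ℂ) * z)) - ((Real.exp (-(2 * π * T)) : ℝ) : ℂ)) := by
  rw [zetaArg, Complex.ofReal_exp, Complex.ofReal_exp]

private lemma w_im_eq (z : ℂ) :
    (Complex.exp (-(((2 * π : ℝ) : ℂ) * z))).im
      = Real.exp (-(2 * π * z.re)) * Real.sin (-(2 * π * z.im)) := by
  rw [Complex.exp_im]
  congr 2 <;> simp [Complex.mul_re, Complex.mul_im] <;> ring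

private lemma w_im_pos {z : ℂ} (hz : z ∈ stripS) :
    0 < (Complex.exp (-(((2 * π : ℝ) : ℂ) * z))).im := by
  obtain ⟨h1, h2⟩ := hz
  rw [w_im_eq]
  have hpi := Real.pi_pos
  have hs : 0 < Real.sin (-(2 * π * z.im)) := by
    apply Real.sin_pos_of_pos_of_lt_pi <;> nlinarith
  positivity

private lemma zetaC_pos {T : ℝ} (hT : 0 < T) : 0 < zetaC T := by
  have hpi := Real.pi_pos
  have h1 : Real.exp (-(2 * π * T)) < 1 := by rw [Real.exp_lt_one_iff]; nlinarith
  have h2 : 1 < Real.exp (2 * π * T) := by rw [Real.one_lt_exp_iff]; nlinarith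
  exact div_pos (by linarith) (by linarith)

private lemma b_lt_a {T : ℝ} (hT : 0 < T) : Real.exp (-(2 * π * T)) < Real.exp (2 * π * T) := by
  have hpi := Real.pi_pos
  exact Real.exp_lt_exp.2 (by nlinarith)

/-- Key (a): the argument of the log is in the open lower half plane on the strip. -/
private lemma zetaArg_im_neg {T : ℝ} (hT : 0 < T) {z : ℂ} (hz : z ∈ stripS) :
    (zetaArg T z).im < 0 := by
  have hwi : 0 < (Complex.exp (-(((2 * π : ℝ) : ℂ) * z))).im := w_im_pos hz
  have hwb : Complex.exp (-(((2 * π : ℝ) : ℂ) * z)) - ((Real.exp (-(2 * π * T)) : ℝ) : ℂ) ≠ 0 := by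
    intro h
    have h2 := congrArg Complex.im h
    simp only [Complex.sub_im, Complex.ofReal_im, sub_zero, Complex.zero_im] at h2
    linarith
  rw [zetaArg_eq, mobius_im']
  have hnsq : 0 < Complex.normSq (Complex.exp (-(((2 * π : ℝ) : ℂ) * z))
      - ((Real.exp (-(2 * π * T)) : ℝ) : ℂ)) := Complex.normSq_pos.2 hwb
  have hC := zetaC_pos hT
  have hab := b_lt_a hT
  apply div_neg_of_neg_of_pos _ hnsq
  nlinarith [mul_pos (mul_pos hC (sub_pos.2 hab)) hwi]

private lemma zetaArg_ne_zero {T : ℝ} (hT : 0 < T) {z : ℂ} (hz : z ∈ stripS) :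
    zetaArg T z ≠ 0 := by
  intro h
  have := zetaArg_im_neg hT hz
  rw [h] at this
  simp at this

/-- Membership of the image in the strip. -/
private lemma zetaMap_mem {T : ℝ} (hT : 0 < T) {z : ℂ} (hz : z ∈ stripS) :
    zetaMap T z ∈ stripS := by
  have hpi := Real.pi_pos
  have h1 := zetaArg_im_neg hT hz
  have h0 := zetaArg_ne_zero hT hz
  have him : (zetaMap T z).im = (1 / (2 * π)) * (zetaArg T z).arg := by
    rw [zetaMap]; simp [Complex.log_im]
  constructor
  · rw [him]
    have := Complex.neg_pi_lt_arg (zetaArg T z)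
    rw [div_mul_eq_mul_div, one_mul, lt_div_iff₀ (by positivity)]
    nlinarith
  · rw [him]
    have harg : (zetaArg T z).arg < 0 := Complex.arg_neg_iff.2 h1
    have : 0 < 1 / (2 * π) := by positivity
    nlinarith


private lemma exp_real_im (r : ℝ) : (Complex.exp ((r : ℝ) : ℂ)).im = 0 := by
  rw [← Complex.ofReal_exp, Complex.ofReal_im]

private lemma zetaMap_differentiableOn {T : ℝ} (hT : 0 < T) :
    DifferentiableOn ℂ (zetaMap T) stripS := by
  intro z hz
  apply DifferentiableAt.differentiableWithinAt
  have hwb : Complex.exp (-(((2 * π : ℝ) : ℂ) * z)) - Complex.exp ((-(2 * π * T) : ℝ) : ℂ) ≠ 0 := by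
    intro h
    have h2 := congrArg Complex.im h
    simp only [Complex.sub_im, Complex.zero_im, exp_real_im, sub_zero] at h2
    have := w_im_pos hz
    linarith
  have harg : DifferentiableAt ℂ (zetaArg T) z := by
    unfold zetaArg
    apply DifferentiableAt.div
    · fun_prop
    · fun_prop
    · exact hwb
  apply DifferentiableAt.const_mul
  exact (Complex.differentiableAt_log (Complex.mem_slitPlane_iff.2
    (Or.inr (zetaArg_im_neg hT hz).ne))).comp z harg

private lemma zetaMap_injOn {T : ℝ} (hT : 0 < T) : Set.InjOn (zetaMap T) stripS := by
  have hpi := Real.pi_pos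
  intro z1 h1 z2 h2 heq
  have ht1 := zetaArg_ne_zero hT h1
  have ht2 := zetaArg_ne_zero hT h2
  have h2π : ((1 / (2 * π) : ℝ) : ℂ) ≠ 0 := by
    rw [Complex.ofReal_ne_zero]
    positivity
  have hlog : Complex.log (zetaArg T z1) = Complex.log (zetaArg T z2) :=
    mul_left_cancel₀ h2π heq
  have htarg : zetaArg T z1 = zetaArg T z2 := by
    rw [← Complex.exp_log ht1, ← Complex.exp_log ht2, hlog]
  have hw1i := w_im_pos h1
  have hw2i := w_im_pos h2
  have hb1 : Complex.exp (-(((2 * π : ℝ) : ℂ) * z1)) - ((Real.exp (-(2 * π * T)) : ℝ) : ℂ) ≠ 0 := by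
    intro h
    have h2 := congrArg Complex.im h
    simp only [Complex.sub_im, Complex.ofReal_im, sub_zero, Complex.zero_im] at h2
    linarith
  have hb2 : Complex.exp (-(((2 * π : ℝ) : ℂ) * z2)) - ((Real.exp (-(2 * π * T)) : ℝ) : ℂ) ≠ 0 := by
    intro h
    have h2 := congrArg Complex.im h
    simp only [Complex.sub_im, Complex.ofReal_im, sub_zero, Complex.zero_im] at h2
    linarith
  rw [zetaArg_eq, zetaArg_eq, div_eq_div_iff hb1 hb2] at htarg
  have hCne : (zetaC T : ℂ) ≠ 0 := by
    rw [Complex.ofReal_ne_zero]; exact (zetaC_pos hT).ne'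
  have habne : ((Real.exp (2 * π * T) : ℝ) : ℂ) - ((Real.exp (-(2 * π * T)) : ℝ) : ℂ) ≠ 0 := by
    rw [← Complex.ofReal_sub, Complex.ofReal_ne_zero]
    exact sub_ne_zero.2 (b_lt_a hT).ne'
  have hww : Complex.exp (-(((2 * π : ℝ) : ℂ) * z1)) = Complex.exp (-(((2 * π : ℝ) : ℂ) * z2)) := by
    have hkey : (zetaC T : ℂ) * (((Real.exp (2 * π * T) : ℝ) : ℂ) - ((Real.exp (-(2 * π * T)) : ℝ) : ℂ))
        * (Complex.exp (-(((2 * π : ℝ) : ℂ) * z2)) - Complex.exp (-(((2 * π : ℝ) : ℂ) * z1))) = 0 := by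
      linear_combination htarg
    rcases mul_eq_zero.1 hkey with h | h
    · exact absurd h (mul_ne_zero hCne habne)
    · have := sub_eq_zero.1 h
      exact this.symm
  rw [Complex.exp_eq_exp_iff_exists_int] at hww
  obtain ⟨n, hn⟩ := hww
  have him := congrArg Complex.im hn
  simp only [Complex.neg_im, Complex.add_im, Complex.mul_im, Complex.ofReal_re, Complex.ofReal_im,
    Complex.intCast_re, Complex.intCast_im, Complex.mul_re, Complex.I_re, Complex.I_im,
    Complex.re_ofNat, Complex.im_ofNat] at him
  -- him : -(2π * z1.im) = -(2π * z2.im) + n * 2π  (roughly)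
  have hn0 : n = 0 := by
    by_contra hne
    have h1le : (1 : ℝ) ≤ |(n : ℝ)| := by
      rw [← Int.cast_abs]
      exact_mod_cast Int.one_le_abs hne
    obtain ⟨ha1, ha2⟩ := h1
    obtain ⟨hb1', hb2'⟩ := h2
    rcases le_abs.1 h1le with h | h <;> nlinarith
  rw [hn0] at hn
  simp only [Int.cast_zero, zero_mul, add_zero] at hn
  have hp : ((2 * π : ℝ) : ℂ) ≠ 0 := by
    rw [Complex.ofReal_ne_zero]; positivity
  have := neg_injective hn
  exact mul_left_cancel₀ hp this

private lemma zetaMap_surjOn {T : ℝ} (hT : 0 < T) {u : ℂ} (hu : u ∈ stripS) :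
    ∃ z ∈ stripS, zetaMap T z = u := by
  have hpi := Real.pi_pos
  obtain ⟨hu1, hu2⟩ := hu
  set t := Complex.exp (((2 * π : ℝ) : ℂ) * u) with ht
  have hti : t.im < 0 := by
    rw [ht, Complex.exp_im]
    have h1 : (((2 * π : ℝ) : ℂ) * u).im = 2 * π * u.im := by simp
    have h2 : Real.sin ((((2 * π : ℝ) : ℂ) * u).im) < 0 := by
      rw [h1]
      exact Real.sin_neg_of_neg_of_neg_pi_lt (by nlinarith) (by nlinarith)
    exact mul_neg_of_pos_of_neg (Real.exp_pos _) h2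
  have hden : (zetaC T : ℂ) + t ≠ 0 := by
    intro h
    have h2 := congrArg Complex.im h
    simp only [Complex.add_im, Complex.ofReal_im, zero_add, Complex.zero_im] at h2
    linarith
  set w := ((zetaC T : ℂ) * ((Real.exp (2 * π * T) : ℝ) : ℂ)
      + ((Real.exp (-(2 * π * T)) : ℝ) : ℂ) * t) / ((zetaC T : ℂ) + t) with hwdef
  have hwim : 0 < w.im := by
    rw [hwdef, mobius2_im']
    have hnsq : 0 < Complex.normSq ((zetaC T : ℂ) + t) := Complex.normSq_pos.2 hden
    apply div_pos _ hnsq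
    have hC := zetaC_pos hT
    have hab := b_lt_a hT
    nlinarith [mul_pos (mul_pos hC (sub_pos.2 hab)) (neg_pos.2 hti)]
  have hw0 : w ≠ 0 := by
    intro h; rw [h] at hwim; simp at hwim
  have hargw2 : w.arg < π := Complex.arg_lt_pi_iff.2 (Or.inr hwim.ne')
  have hargw1 : 0 < w.arg := by
    rcases lt_or_eq_of_le (Complex.arg_nonneg_iff.2 hwim.le) with h | h
    · exact h
    · exfalso
      have := (Complex.arg_eq_zero_iff.1 h.symm).2
      linarith
  refine ⟨((-(1 / (2 * π)) : ℝ) : ℂ) * Complex.log w, ⟨?_, ?_⟩, ?_⟩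
  · have : ((((-(1 / (2 * π)) : ℝ) : ℂ)) * Complex.log w).im = -(1 / (2 * π)) * w.arg := by
      simp [Complex.log_im]
    rw [this]
    rw [neg_lt, neg_mul, neg_neg]
    rw [div_mul_eq_mul_div, one_mul, div_lt_iff₀ (by positivity)]
    nlinarith
  · have : ((((-(1 / (2 * π)) : ℝ) : ℂ)) * Complex.log w).im = -(1 / (2 * π)) * w.arg := by
      simp [Complex.log_im]
    rw [this]
    have h2π : 0 < 1 / (2 * π) := by positivity
    nlinarith
  · have hexp : Complex.exp (-(((2 * π : ℝ) : ℂ)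
        * (((-(1 / (2 * π)) : ℝ) : ℂ) * Complex.log w))) = w := by
      have heq : -(((2 * π : ℝ) : ℂ) * (((-(1 / (2 * π)) : ℝ) : ℂ) * Complex.log w))
          = Complex.log w := by
        have hpne : (π : ℂ) ≠ 0 := Complex.ofReal_ne_zero.2 hpi.ne'
        push_cast
        field_simp
      rw [heq, Complex.exp_log hw0]
    have hwb : w - ((Real.exp (-(2 * π * T)) : ℝ) : ℂ) ≠ 0 := by
      intro h
      have h2 := congrArg Complex.im h
      simp only [Complex.sub_im, Complex.ofReal_im, sub_zero, Complex.zero_im] at h2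
      linarith
    have hargz : zetaArg T (((-(1 / (2 * π)) : ℝ) : ℂ) * Complex.log w) = t := by
      rw [zetaArg_eq, hexp, div_eq_iff hwb, hwdef]
      field_simp
      ring
    rw [zetaMap, hargz, ht, Complex.log_exp]
    · have hpne : (π : ℂ) ≠ 0 := Complex.ofReal_ne_zero.2 hpi.ne'
      push_cast
      field_simp
    · simp only [Complex.mul_im, Complex.ofReal_re, Complex.ofReal_im]
      nlinarith
    · simp only [Complex.mul_im, Complex.ofReal_re, Complex.ofReal_im]
      nlinarith


/-- The real version of `zetaArg` for real arguments. -/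
private def zetaR (T x : ℝ) : ℝ :=
  zetaC T * (Real.exp (2 * π * T) - Real.exp (-(2 * π * x)))
    / (Real.exp (-(2 * π * x)) - Real.exp (-(2 * π * T)))

private lemma zetaArg_ofReal (T x : ℝ) : zetaArg T (x : ℂ) = ((zetaR T x : ℝ) : ℂ) := by
  rw [zetaArg, zetaR]
  have hx : -(((2 * π : ℝ) : ℂ) * ((x : ℝ) : ℂ)) = ((-(2 * π * x) : ℝ) : ℂ) := by
    push_cast; ring
  rw [hx, ← Complex.ofReal_exp, ← Complex.ofReal_exp, ← Complex.ofReal_exp]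
  norm_cast

private lemma zetaR_pos {T : ℝ} (hT : 0 < T) {x : ℝ} (hx : -T < x) (hx' : x < T) :
    0 < zetaR T x := by
  have hpi := Real.pi_pos
  have h1 : Real.exp (-(2 * π * x)) < Real.exp (2 * π * T) := Real.exp_lt_exp.2 (by nlinarith)
  have h2 : Real.exp (-(2 * π * T)) < Real.exp (-(2 * π * x)) := Real.exp_lt_exp.2 (by nlinarith)
  exact div_pos (mul_pos (zetaC_pos hT) (by linarith)) (by linarith)

private lemma zetaMap_ofReal {T : ℝ} (hT : 0 < T) {x : ℝ} (hx : -T < x) (hx' : x < T) :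
    zetaMap T (x : ℂ) = (((1 / (2 * π)) * Real.log (zetaR T x) : ℝ) : ℂ) := by
  rw [zetaMap, zetaArg_ofReal, ← Complex.ofReal_log (zetaR_pos hT hx hx').le]
  norm_cast

private lemma zetaR_strictAnti {T : ℝ} (hT : 0 < T) {x₁ x₂ : ℝ}
    (h₁ : x₁ ∈ Set.Ioo (-T) T) (h₂ : x₂ ∈ Set.Ioo (-T) T) (h : x₁ < x₂) :
    zetaR T x₁ < zetaR T x₂ := by
  have hpi := Real.pi_pos
  obtain ⟨h1a, h1b⟩ := h₁
  obtain ⟨h2a, h2b⟩ := h₂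
  set w₁ := Real.exp (-(2 * π * x₁)) with hw1
  set w₂ := Real.exp (-(2 * π * x₂)) with hw2
  have hw21 : w₂ < w₁ := Real.exp_lt_exp.2 (by nlinarith)
  have hb1 : Real.exp (-(2 * π * T)) < w₁ := Real.exp_lt_exp.2 (by nlinarith)
  have hb2 : Real.exp (-(2 * π * T)) < w₂ := Real.exp_lt_exp.2 (by nlinarith)
  have ha1 : w₁ < Real.exp (2 * π * T) := Real.exp_lt_exp.2 (by nlinarith)
  have ha2 : w₂ < Real.exp (2 * π * T) := Real.exp_lt_exp.2 (by nlinarith)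
  have hC := zetaC_pos hT
  rw [zetaR, zetaR, div_lt_div_iff₀ (by linarith) (by linarith)]
  nlinarith [mul_pos (mul_pos hC (sub_pos.2 (b_lt_a hT))) (sub_pos.2 hw21)]

private lemma zetaMap_real_surj {T : ℝ} (hT : 0 < T) (y : ℝ) :
    ∃ x ∈ Set.Ioo (-T) T, (zetaMap T (x : ℂ)).re = y := by
  have hpi := Real.pi_pos
  set t := Real.exp (2 * π * y) with htdef
  have ht : 0 < t := Real.exp_pos _
  have hC := zetaC_pos hT
  have hab := b_lt_a hT
  set a := Real.exp (2 * π * T) with hadef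
  set b := Real.exp (-(2 * π * T)) with hbdef
  have hden : 0 < zetaC T + t := by linarith
  set w := (zetaC T * a + b * t) / (zetaC T + t) with hwdef
  have hwb : b < w := by
    rw [hwdef, lt_div_iff₀ hden]
    nlinarith
  have hwa : w < a := by
    rw [hwdef, div_lt_iff₀ hden]
    nlinarith
  have hw0 : 0 < w := lt_trans (Real.exp_pos _) hwb
  set x := -(Real.log w) / (2 * π) with hxdef
  have hlw1 : -(2 * π * T) < Real.log w := by
    rw [← Real.log_exp (-(2 * π * T))]
    exact Real.log_lt_log (Real.exp_pos _) hwb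
  have hlw2 : Real.log w < 2 * π * T := by
    rw [← Real.log_exp (2 * π * T)]
    exact Real.log_lt_log hw0 hwa
  have hx1 : -T < x := by
    rw [hxdef, lt_div_iff₀ (by positivity)]
    nlinarith
  have hx2 : x < T := by
    rw [hxdef, div_lt_iff₀ (by positivity)]
    nlinarith
  refine ⟨x, ⟨hx1, hx2⟩, ?_⟩
  have hexpx : Real.exp (-(2 * π * x)) = w := by
    rw [hxdef]
    have : -(2 * π * (-(Real.log w) / (2 * π))) = Real.log w := by
      field_simp
    rw [this, Real.exp_log hw0]
  have hRt : zetaR T x = t := by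
    rw [zetaR, hexpx, ← hadef, ← hbdef]
    rw [hwdef]
    rw [div_eq_iff (by nlinarith)]
    field_simp
    ring
  rw [zetaMap_ofReal hT hx1 hx2, Complex.ofReal_re, hRt, htdef, Real.log_exp]
  field_simp

/-- For `T > 0`:
(a) for `z` in the open strip `S = S(−1/2,0)` the argument of the logarithm lies in the
open lower half-plane, and `ζ` is holomorphic on `S`;
(b) `ζ` maps `S` biholomorphically onto `S` (injective on `S` with image `S`);
(c) for real `x` with `|x| < T` the value `ζ(x)` is real, and `x ↦ ζ(x)` is a strictly
increasing bijection from `(−T, T)` onto `ℝ`. -/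
theorem zeta_biholomorphic_strip (T : ℝ) (hT : 0 < T) :
    ((∀ z ∈ stripS, (zetaArg T z).im < 0) ∧ DifferentiableOn ℂ (zetaMap T) stripS) ∧
    (Set.InjOn (zetaMap T) stripS ∧ zetaMap T '' stripS = stripS) ∧
    ((∀ x : ℝ, |x| < T → (zetaMap T x).im = 0) ∧
      StrictMonoOn (fun x : ℝ => (zetaMap T x).re) (Set.Ioo (-T) T) ∧
      (fun x : ℝ => (zetaMap T x).re) '' Set.Ioo (-T) T = Set.univ) := by
  refine ⟨⟨fun z hz => zetaArg_im_neg hT hz, zetaMap_differentiableOn hT⟩,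
    ⟨zetaMap_injOn hT, ?_⟩, ?_, ?_, ?_⟩
  · ext u
    constructor
    · rintro ⟨z, hz, rfl⟩
      exact zetaMap_mem hT hz
    · intro hu
      obtain ⟨z, hz, hzu⟩ := zetaMap_surjOn hT hu
      exact ⟨z, hz, hzu⟩
  · intro x hx
    rw [abs_lt] at hx
    rw [zetaMap_ofReal hT hx.1 hx.2, Complex.ofReal_im]
  · intro x₁ h₁ x₂ h₂ h
    simp only
    rw [zetaMap_ofReal hT h₁.1 h₁.2, zetaMap_ofReal hT h₂.1 h₂.2,
      Complex.ofReal_re, Complex.ofReal_re]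
    have := Real.log_lt_log (zetaR_pos hT h₁.1 h₁.2) (zetaR_strictAnti hT h₁ h₂ h)
    have hpi := Real.pi_pos
    have h2π : 0 < 1 / (2 * π) := by positivity
    nlinarith
  · ext y
    simp only [Set.mem_image, Set.mem_univ, iff_true]
    obtain ⟨x, hx, hxy⟩ := zetaMap_real_surj hT y
    exact ⟨x, hx, hxy⟩
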